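/- arXiv:1007.1229 — 2 statements merged into one kernel-verified Lean document; each statement's English description precedes it below -/
import Mathlib

section
/- Every strongly tree-submodular function is weakly tree-submodular: if f:D→ℝ satisfies f(x)+f(y) ≥ f(x⊓y)+f(x⊔y) for all x,y∈D, then f(x)+f(y) ≥ f(x∧y)+f(x∨y) for all x,y∈D. -/
/-!
Along `P[xᵢ→yᵢ]` each tree is an integer interval, indexed so that `xᵢ ∧ yᵢ` sits at `0`; there
`a ∧ b` is the median of `a`, `b`, `0` and `a ⊓ b` the midpoint of `a`, `b` rounded towards `0`.
So `f` becomes a function `g` on a box of `ℤⁿ` that satisfies the strong inequality, and the weak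
inequality for `g` is proved by induction on the `ℓ¹` distance of the pair `p, q`:
* if `|pᵢ - qᵢ| ≤ 1` for all `i`, then `⊓, ⊔` agree with `∧, ∨`;
* if every `pᵢ, qᵢ` are comparable, cutting a coordinate with `|pᵢ - qᵢ| ≥ 2` at its midpoint
  splits the inequality into two shorter weak ones;
* if `|pᵢ| ≤ |qᵢ|` for all `i`, the weak inequality at `(p, p ∨ q)` and the strong one at
  `(p ∨ (p ∨ q), q)`, whose midpoint is exactly `p ∨ q`, add up to the claim;
* otherwise the point `r` that follows `q` where `|pᵢ| ≤ |qᵢ|` and `p` elsewhere decouples the two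
  kinds of coordinates: the weak inequalities at `(p, r)`, `(r, q)`, `(p ∧ r, r ∧ q)` and
  `(p ∨ r, r ∨ q)` telescope.
-/

/-- A finite rooted tree on vertex set `V`, encoded by its root, the parent function
(with `parent root = root`) and the depth function (distance to the root). -/
structure RTree (V : Type*) where
  root : V
  parent : V → V
  depth : V → ℕ
  parent_root : parent root = root
  depth_root : depth root = 0
  depth_parent : ∀ v, v ≠ root → depth (parent v) + 1 = depth v

namespace RTree

variable {V : Type*} (T : RTree V)

/-- `a ⪯ b` : `a` is an ancestor of `b`, i.e. `a` lies on the path from `b` to the root. -/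
def anc (a b : V) : Prop := ∃ k : ℕ, T.parent^[k] b = a

theorem iterate_depth_aux : ∀ (n : ℕ) (v : V), T.depth v = n → T.parent^[n] v = T.root := by
  intro n
  induction n with
  | zero =>
    intro v hn
    by_cases hv : v = T.root
    · simp [hv]
    · have := T.depth_parent v hv; omega
  | succ n ih =>
    intro v hn
    have hv : v ≠ T.root := by
      intro h; rw [h, T.depth_root] at hn; omega
    have h := T.depth_parent v hv
    rw [Function.iterate_succ_apply]
    exact ih (T.parent v) (by omega)

theorem iterate_depth (v : V) : T.parent^[T.depth v] v = T.root :=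
  T.iterate_depth_aux (T.depth v) v rfl

theorem anc_root (b : V) : T.anc T.root b := ⟨T.depth b, T.iterate_depth b⟩

theorem exists_lcaIndex (a b : V) : ∃ k : ℕ, T.anc (T.parent^[k] a) b :=
  ⟨T.depth a, by rw [T.iterate_depth a]; exact T.anc_root b⟩

open Classical in
/-- The highest common ancestor of `a` and `b` : the deepest vertex that is an ancestor
of both `a` and `b` (i.e. the unique vertex of the path `P[a→b]` that is an ancestor of both). -/
noncomputable def lca (a b : V) : V := T.parent^[Nat.find (T.exists_lcaIndex a b)] a

/-- `ρ(a,b)` : the number of edges of the unique path `P[a→b]` from `a` to `b`. -/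
noncomputable def dist (a b : V) : ℕ :=
  (T.depth a - T.depth (T.lca a b)) + (T.depth b - T.depth (T.lca a b))

open Classical in
/-- `P[a→b, d]` : the `d`-th vertex of the path from `a` to `b` (first the ascending part
from `a` to the highest common ancestor, then the descending part towards `b`);
by convention it equals `b` for `d > ρ(a,b)`. -/
noncomputable def pathVertex (a b : V) (d : ℕ) : V :=
  if T.dist a b ≤ d then b
  else if d ≤ T.depth a - T.depth (T.lca a b) then T.parent^[d] a
  else T.parent^[T.dist a b - d] b

open Classical in
/-- `a ⊓ b` : the member of `{P[a→b,⌊ρ(a,b)/2⌋], P[a→b,⌈ρ(a,b)/2⌉]}` that is an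
ancestor of the other one. -/
noncomputable def cap (a b : V) : V :=
  if T.anc (T.pathVertex a b (T.dist a b / 2)) (T.pathVertex a b ((T.dist a b + 1) / 2))
  then T.pathVertex a b (T.dist a b / 2)
  else T.pathVertex a b ((T.dist a b + 1) / 2)

open Classical in
/-- `a ⊔ b` : the member of `{P[a→b,⌊ρ(a,b)/2⌋], P[a→b,⌈ρ(a,b)/2⌉]}` that is a
descendant of the other one. -/
noncomputable def cup (a b : V) : V :=
  if T.anc (T.pathVertex a b (T.dist a b / 2)) (T.pathVertex a b ((T.dist a b + 1) / 2))
  then T.pathVertex a b ((T.dist a b + 1) / 2)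
  else T.pathVertex a b (T.dist a b / 2)

/-- `a ∧ b` : the highest common ancestor of `a` and `b`. -/
noncomputable def meet (a b : V) : V := T.lca a b

/-- `a ∨ b` : the unique vertex of `P[a→b]` with `ρ(a, a∨b) = ρ(a∧b, b)`. -/
noncomputable def join (a b : V) : V :=
  T.pathVertex a b (T.depth b - T.depth (T.lca a b))

/-- `a ↑^d b = P[a→b,d] ∧ b`. -/
noncomputable def up (d : ℕ) (a b : V) : V := T.meet (T.pathVertex a b d) b

/-- `a ↓_d b = P[a→b, ρ(a ↑^d b, b)]`. -/
noncomputable def down (d : ℕ) (a b : V) : V :=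
  T.pathVertex a b (T.dist (T.up d a b) b)

end RTree

section Product

variable {ι : Type*} {V : ι → Type*}

/-- `f` is strongly tree-submodular w.r.t. the trees `T i`:
`f(x) + f(y) ≥ f(x ⊓ y) + f(x ⊔ y)`, the operations acting componentwise. -/
def StronglyTreeSubmodular (T : ∀ i, RTree (V i)) (f : (∀ i, V i) → ℝ) : Prop :=
  ∀ x y : ∀ i, V i,
    f (fun i => (T i).cap (x i) (y i)) + f (fun i => (T i).cup (x i) (y i)) ≤ f x + f y

/-- `INWARD(x) = { y ∈ NEIB(x) : y ⪯ x }`, where `NEIB(x) = {y : max_i ρ(x_i,y_i) ≤ 1}`. -/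
def inward (T : ∀ i, RTree (V i)) (x : ∀ i, V i) : Set (∀ i, V i) :=
  {y | (∀ i, (T i).dist (x i) (y i) ≤ 1) ∧ ∀ i, (T i).anc (y i) (x i)}

/-- `OUTWARD(x) = { y ∈ NEIB(x) : x ⪯ y }`. -/
def outward (T : ∀ i, RTree (V i)) (x : ∀ i, V i) : Set (∀ i, V i) :=
  {y | (∀ i, (T i).dist (x i) (y i) ≤ 1) ∧ ∀ i, (T i).anc (x i) (y i)}

end Product

namespace RootedInt

/-- `ℤ` as the path rooted at `0`, so that `p` is an ancestor of `q` iff `0 ≤ p ≤ q` or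
`q ≤ p ≤ 0`. Then `p ∧ q` is the median of `p`, `q`, `0`, and `p ⊓ q` (`cap`) is the midpoint
of `p` and `q` rounded towards `0`. -/
def meet (p q : ℤ) : ℤ := max (min p q) (min (max p q) 0)

def join (p q : ℤ) : ℤ := p + q - meet p q

def cap (p q : ℤ) : ℤ := if 0 ≤ p + q then (p + q) / 2 else p + q - (p + q) / 2

def cup (p q : ℤ) : ℤ := p + q - cap p q

theorem meet_comm (p q : ℤ) : meet p q = meet q p := by unfold meet; omega

theorem join_comm (p q : ℤ) : join p q = join q p := by unfold join; rw [meet_comm]; ring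

theorem cap_eq_meet {p q : ℤ} (h : (p - q).natAbs ≤ 1) : cap p q = meet p q := by
  unfold cap meet; split_ifs <;> omega

theorem split_identities {p q z : ℤ} (hpq : meet p q = p ∨ meet p q = q)
    (hz : min (meet p q) q ≤ z ∧ z ≤ max (meet p q) q) :
    meet p z = meet p q ∧ meet (join p z) q = z ∧ join (join p z) q = join p q := by
  unfold join meet at *; omega

theorem natAbs_le_identities {p q : ℤ} (h : p.natAbs ≤ q.natAbs) :
    meet p (join p q) = meet p q ∧ cap (join p (join p q)) q = join p q ∧
      cup (join p (join p q)) q = join p q := by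
  unfold cup cap join meet; split_ifs <;> omega

theorem decouple_identities {p q r : ℤ} (hr : r = if p.natAbs ≤ q.natAbs then q else p) :
    meet (meet p r) (meet r q) = meet p q ∧ join (meet p r) (meet r q) = r ∧
      meet (join p r) (join r q) = join p q ∧ join (join p r) (join r q) = r := by
  subst hr
  unfold join meet
  split_ifs <;> omega

section Vector

variable {ι : Type*}

def WeakAt (g : (ι → ℤ) → ℝ) (p q : ι → ℤ) : Prop :=
  g (fun i => meet (p i) (q i)) + g (fun i => join (p i) (q i)) ≤ g p + g q

def StrongAt (g : (ι → ℤ) → ℝ) (p q : ι → ℤ) : Prop :=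
  g (fun i => cap (p i) (q i)) + g (fun i => cup (p i) (q i)) ≤ g p + g q

theorem WeakAt.symm {g : (ι → ℤ) → ℝ} {p q : ι → ℤ} (h : WeakAt g p q) : WeakAt g q p := by
  unfold WeakAt at *
  simp only [meet_comm (q _), join_comm (q _)]
  linarith

theorem StrongAt.weakAt {g : (ι → ℤ) → ℝ} {p q : ι → ℤ} (hs : StrongAt g p q)
    (h : ∀ i, (p i - q i).natAbs ≤ 1) : WeakAt g p q := by
  have hcap : ∀ i, cap (p i) (q i) = meet (p i) (q i) := fun i => cap_eq_meet (h i)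
  simpa only [StrongAt, WeakAt, cup, join, hcap] using hs

def Between (p q u : ι → ℤ) : Prop := ∀ i, min (p i) (q i) ≤ u i ∧ u i ≤ max (p i) (q i)

namespace Between

variable {p q u v : ι → ℤ}

theorem left : Between p q p := fun i => by omega

theorem right : Between p q q := fun i => by omega

theorem meet (hu : Between p q u) (hv : Between p q v) :
    Between p q fun i => RootedInt.meet (u i) (v i) := fun i => by
  have := hu i; have := hv i; dsimp only; unfold RootedInt.meet; omega

theorem join (hu : Between p q u) (hv : Between p q v) :
    Between p q fun i => RootedInt.join (u i) (v i) := fun i => by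
  have := hu i; have := hv i; dsimp only; unfold RootedInt.join RootedInt.meet; omega

theorem mem_Icc {lo hi : ι → ℤ} (hu : Between p q u) (hp : p ∈ Set.Icc lo hi)
    (hq : q ∈ Set.Icc lo hi) : u ∈ Set.Icc lo hi := by
  simp only [Set.mem_Icc, Pi.le_def] at hp hq ⊢
  exact ⟨fun i => by have := hp.1 i; have := hq.1 i; have := hu i; omega,
    fun i => by have := hp.2 i; have := hq.2 i; have := hu i; omega⟩

end Between

variable [Fintype ι]

def l1dist (p q : ι → ℤ) : ℕ := ∑ i, (p i - q i).natAbs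

theorem l1dist_comm (p q : ι → ℤ) : l1dist p q = l1dist q p := by
  unfold l1dist; congr 1; ext i; omega

def WeakBelow (g : (ι → ℤ) → ℝ) (lo hi : ι → ℤ) (n : ℕ) : Prop :=
  ∀ u ∈ Set.Icc lo hi, ∀ v ∈ Set.Icc lo hi, l1dist u v < n → WeakAt g u v

variable {g : (ι → ℤ) → ℝ} {lo hi p q : ι → ℤ}

theorem WeakBelow.weakAt (ih : WeakBelow g lo hi (l1dist p q)) (hp : p ∈ Set.Icc lo hi)
    (hq : q ∈ Set.Icc lo hi) {u v : ι → ℤ} (hu : Between p q u) (hv : Between p q v) (i₀ : ι)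
    (hlt : (u i₀ - v i₀).natAbs < (p i₀ - q i₀).natAbs) : WeakAt g u v :=
  ih u (hu.mem_Icc hp hq) v (hv.mem_Icc hp hq) <|
    Finset.sum_lt_sum (fun i _ => by have := hu i; have := hv i; omega)
      ⟨i₀, Finset.mem_univ _, hlt⟩

theorem weakAt_of_split (ih : WeakBelow g lo hi (l1dist p q)) (hp : p ∈ Set.Icc lo hi)
    (hq : q ∈ Set.Icc lo hi) (hcomp : ∀ i, meet (p i) (q i) = p i ∨ meet (p i) (q i) = q i)
    {i₀ : ι} (hi₀ : meet (p i₀) (q i₀) = p i₀) (hfar : 2 ≤ (p i₀ - q i₀).natAbs) :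
    WeakAt g p q := by
  classical
  set z : ι → ℤ := Function.update (fun i => meet (p i) (q i)) i₀ ((p i₀ + q i₀) / 2) with hz
  have hzq : ∀ i, min (meet (p i) (q i)) (q i) ≤ z i ∧ z i ≤ max (meet (p i) (q i)) (q i) := by
    intro i
    rcases eq_or_ne i i₀ with rfl | hi
    · simp only [hz, Function.update_self]; unfold meet at hi₀ ⊢; omega
    · simp only [hz, Function.update_of_ne hi]; omega
  have hid := fun i => split_identities (hcomp i) (hzq i)
  have hzb : Between p q z := fun i => by
    have := hzq i; have := hid i; unfold join meet at *; omega
  have hz₀ : z i₀ = (p i₀ + q i₀) / 2 := Function.update_self ..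
  have h₁ : WeakAt g p z := ih.weakAt hp hq .left hzb i₀ (by omega)
  have h₂ : WeakAt g (fun i => join (p i) (z i)) q :=
    ih.weakAt hp hq (.join .left hzb) .right i₀ (by rw [join, (hid i₀).1, hi₀, hz₀]; omega)
  unfold WeakAt at *
  simp only [fun i => (hid i).1, fun i => (hid i).2.1, fun i => (hid i).2.2] at h₁ h₂
  linarith

theorem weakAt_of_natAbs_le (hS : ∀ u ∈ Set.Icc lo hi, ∀ v ∈ Set.Icc lo hi, StrongAt g u v)
    (ih : WeakBelow g lo hi (l1dist p q)) (hp : p ∈ Set.Icc lo hi) (hq : q ∈ Set.Icc lo hi)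
    (habs : ∀ i, (p i).natAbs ≤ (q i).natAbs) {i₁ : ι} (hi₁ : meet (p i₁) (q i₁) ≠ p i₁) :
    WeakAt g p q := by
  set j : ι → ℤ := fun i => join (p i) (q i)
  have hid := fun i => natAbs_le_identities (habs i)
  have hj : Between p q j := .join .left .right
  have h₁ : WeakAt g p j := ih.weakAt hp hq .left hj i₁ (by
    have := habs i₁; simp only [j, join, meet] at hi₁ ⊢; omega)
  have h₂ : StrongAt g (fun i => join (p i) (j i)) q :=
    hS _ ((Between.join .left hj).mem_Icc hp hq) q hq
  have e₁ : (fun i => meet (p i) (j i)) = fun i => meet (p i) (q i) := funext fun i => (hid i).1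
  have e₂ : (fun i => cap (join (p i) (j i)) (q i)) = j := funext fun i => (hid i).2.1
  have e₃ : (fun i => cup (join (p i) (j i)) (q i)) = j := funext fun i => (hid i).2.2
  unfold WeakAt StrongAt at *
  rw [e₁] at h₁
  rw [e₂, e₃] at h₂
  linarith

theorem weakAt_of_decouple (ih : WeakBelow g lo hi (l1dist p q)) (hp : p ∈ Set.Icc lo hi)
    (hq : q ∈ Set.Icc lo hi) {i₁ i₂ i₃ : ι}
    (hi₁ : meet (p i₁) (q i₁) ≠ p i₁ ∧ meet (p i₁) (q i₁) ≠ q i₁)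
    (hi₂ : (p i₂).natAbs ≤ (q i₂).natAbs ∧ p i₂ ≠ q i₂) (hi₃ : (q i₃).natAbs < (p i₃).natAbs) :
    WeakAt g p q := by
  set r : ι → ℤ := fun i => if (p i).natAbs ≤ (q i).natAbs then q i else p i with hr
  have hid := fun i => decouple_identities (p := p i) (q := q i) (r := r i) rfl
  have hrb : Between p q r := fun i => by simp only [hr]; split_ifs <;> omega
  have h₁ : WeakAt g p r := ih.weakAt hp hq .left hrb i₃ (by
    simp only [hr, if_neg (not_le.2 hi₃)]; omega)
  have h₂ : WeakAt g r q := ih.weakAt hp hq hrb .right i₂ (by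
    simp only [hr, if_pos hi₂.1]; omega)
  have h₃ : WeakAt g (fun i => meet (p i) (r i)) (fun i => meet (r i) (q i)) :=
    ih.weakAt hp hq (.meet .left hrb) (.meet hrb .right) i₁ (by
      simp only [hr]; unfold meet at hi₁ ⊢; split_ifs <;> omega)
  have h₄ : WeakAt g (fun i => join (p i) (r i)) (fun i => join (r i) (q i)) :=
    ih.weakAt hp hq (.join .left hrb) (.join hrb .right) i₃ (by
      simp only [hr, if_neg (not_le.2 hi₃)]; unfold join meet; omega)
  have e₁ : (fun i => meet (meet (p i) (r i)) (meet (r i) (q i))) = fun i => meet (p i) (q i) :=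
    funext fun i => (hid i).1
  have e₂ : (fun i => join (meet (p i) (r i)) (meet (r i) (q i))) = r :=
    funext fun i => (hid i).2.1
  have e₃ : (fun i => meet (join (p i) (r i)) (join (r i) (q i))) = fun i => join (p i) (q i) :=
    funext fun i => (hid i).2.2.1
  have e₄ : (fun i => join (join (p i) (r i)) (join (r i) (q i))) = r :=
    funext fun i => (hid i).2.2.2
  unfold WeakAt at *
  rw [e₁, e₂] at h₃
  rw [e₃, e₄] at h₄
  linarith

theorem weakAt_of_strongAt (hS : ∀ u ∈ Set.Icc lo hi, ∀ v ∈ Set.Icc lo hi, StrongAt g u v) :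
    ∀ p ∈ Set.Icc lo hi, ∀ q ∈ Set.Icc lo hi, WeakAt g p q := by
  intro p hp q hq
  induction hn : l1dist p q using Nat.strong_induction_on generalizing p q with
  | _ n ih =>
  have ihpq : WeakBelow g lo hi (l1dist p q) := fun u hu v hv huv => ih _ (hn ▸ huv) u hu v hv rfl
  have ihqp : WeakBelow g lo hi (l1dist q p) := l1dist_comm p q ▸ ihpq
  by_cases hcomp : ∀ i, meet (p i) (q i) = p i ∨ meet (p i) (q i) = q i
  · by_cases hnear : ∀ i, (p i - q i).natAbs ≤ 1
    · exact (hS p hp q hq).weakAt hnear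
    push Not at hnear
    obtain ⟨i₀, hi₀⟩ := hnear
    rcases hcomp i₀ with h | h
    · exact weakAt_of_split ihpq hp hq hcomp h (by omega)
    · refine (weakAt_of_split ihqp hq hp (i₀ := i₀) (fun i => ?_) ?_ (by omega)).symm
      · rw [meet_comm]; exact (hcomp i).symm
      · rw [meet_comm]; exact h
  push Not at hcomp
  obtain ⟨i₁, hi₁⟩ := hcomp
  by_cases hC : ∃ i, (q i).natAbs < (p i).natAbs
  · obtain ⟨i₃, hi₃⟩ := hC
    by_cases hB : ∃ i, (p i).natAbs ≤ (q i).natAbs ∧ p i ≠ q i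
    · obtain ⟨i₂, hi₂⟩ := hB
      exact weakAt_of_decouple ihpq hp hq hi₁ hi₂ hi₃
    push Not at hB
    refine (weakAt_of_natAbs_le hS ihqp hq hp (i₁ := i₁) (fun i => ?_) ?_).symm
    · by_cases h : (p i).natAbs ≤ (q i).natAbs
      · rw [hB i h]
      · omega
    · rw [meet_comm]; exact hi₁.2
  push Not at hC
  exact weakAt_of_natAbs_le hS ihpq hp hq hC hi₁.1

end Vector

end RootedInt

namespace RTree

variable {V : Type*} (T : RTree V)

theorem depth_iterate_add {v : V} {j : ℕ} (hj : j ≤ T.depth v) :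
    T.depth (T.parent^[j] v) + j = T.depth v := by
  induction j with
  | zero => rfl
  | succ j ih =>
    have hj' := ih (by omega)
    have hne : T.parent^[j] v ≠ T.root := by
      intro h
      rw [h, T.depth_root] at hj'
      omega
    rw [Function.iterate_succ_apply', ← hj', ← T.depth_parent _ hne]
    omega

theorem iterate_eq_root {v : V} {j : ℕ} (hj : T.depth v ≤ j) : T.parent^[j] v = T.root := by
  rw [← Nat.sub_add_cancel hj, Function.iterate_add_apply, T.iterate_depth,
    Function.iterate_fixed T.parent_root]

variable {T}

theorem anc.depth_le {w v : V} (h : T.anc w v) : T.depth w ≤ T.depth v := by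
  obtain ⟨k, rfl⟩ := h
  by_cases hk : k ≤ T.depth v
  · have := T.depth_iterate_add hk
    omega
  · rw [T.iterate_eq_root (by omega), T.depth_root]
    exact Nat.zero_le _

theorem anc.iterate_eq {w v : V} (h : T.anc w v) : T.parent^[T.depth v - T.depth w] v = w := by
  obtain ⟨k, rfl⟩ := h
  by_cases hk : k ≤ T.depth v
  · rw [show T.depth v - T.depth (T.parent^[k] v) = k by have := T.depth_iterate_add hk; omega]
  · rw [T.iterate_eq_root (j := k) (by omega), T.depth_root, Nat.sub_zero, T.iterate_depth]

theorem anc.trans {u w v : V} (h₁ : T.anc u w) (h₂ : T.anc w v) : T.anc u v := by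
  obtain ⟨k, rfl⟩ := h₁
  obtain ⟨l, rfl⟩ := h₂
  exact ⟨k + l, Function.iterate_add_apply _ _ _ _⟩

theorem anc.antisymm {u v : V} (h₁ : T.anc u v) (h₂ : T.anc v u) : u = v := by
  have := h₁.iterate_eq
  rwa [show T.depth v - T.depth u = 0 by have := h₁.depth_le; have := h₂.depth_le; omega,
    Function.iterate_zero_apply, eq_comm] at this

variable (T)

theorem lca_anc_left (a b : V) : T.anc (T.lca a b) a := ⟨_, rfl⟩

theorem lca_anc_right (a b : V) : T.anc (T.lca a b) b := by
  classical
  exact Nat.find_spec (T.exists_lcaIndex a b)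

theorem anc_lca {w a b : V} (ha : T.anc w a) (hb : T.anc w b) : T.anc w (T.lca a b) := by
  classical
  have hmin : Nat.find (T.exists_lcaIndex a b) ≤ T.depth a - T.depth w :=
    Nat.find_min' _ (by rw [ha.iterate_eq]; exact hb)
  refine ⟨T.depth a - T.depth w - Nat.find (T.exists_lcaIndex a b), ?_⟩
  rw [lca, ← Function.iterate_add_apply, Nat.sub_add_cancel hmin, ha.iterate_eq]

variable (a b : V)

/-- `ρ(a, a ∧ b)`, the length of the ascending part of `P[a→b]`. -/
noncomputable def ascent : ℕ := T.depth a - T.depth (T.lca a b)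

theorem ascent_def : T.ascent a b = T.depth a - T.depth (T.lca a b) := rfl

theorem dist_eq_ascent_add : T.dist a b = T.ascent a b + (T.depth b - T.depth (T.lca a b)) := rfl

theorem iterate_ascent : T.parent^[T.ascent a b] a = T.lca a b := (T.lca_anc_left a b).iterate_eq

theorem iterate_dist_sub_ascent : T.parent^[T.dist a b - T.ascent a b] b = T.lca a b := by
  rw [dist_eq_ascent_add, Nat.add_sub_cancel_left]
  exact (T.lca_anc_right a b).iterate_eq

variable {a b}

theorem pathVertex_of_le_ascent {t : ℕ} (ht : t ≤ T.ascent a b) :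
    T.pathVertex a b t = T.parent^[t] a := by
  unfold pathVertex
  split_ifs with hd hta
  · have hta : t = T.ascent a b := by rw [dist_eq_ascent_add] at hd; omega
    have hdt : T.dist a b - T.ascent a b = 0 := by omega
    rw [hta, iterate_ascent, ← T.iterate_dist_sub_ascent, hdt, Function.iterate_zero_apply]
  · rfl
  · exact absurd ht hta

theorem pathVertex_of_ascent_le {t : ℕ} (ht : T.ascent a b ≤ t) :
    T.pathVertex a b t = T.parent^[T.dist a b - t] b := by
  unfold pathVertex
  split_ifs with hd hta
  · rw [Nat.sub_eq_zero_of_le hd, Function.iterate_zero_apply]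
  · rw [show t = T.ascent a b by unfold ascent at *; omega, iterate_ascent,
      iterate_dist_sub_ascent]
  · rfl

theorem pathVertex_zero : T.pathVertex a b 0 = a := T.pathVertex_of_le_ascent (Nat.zero_le _)

theorem pathVertex_dist : T.pathVertex a b (T.dist a b) = b := by
  rw [T.pathVertex_of_ascent_le (t := T.dist a b) (Nat.le_add_right _ _), Nat.sub_self,
    Function.iterate_zero_apply]

theorem pathVertex_ascent : T.pathVertex a b (T.ascent a b) = T.lca a b := by
  rw [T.pathVertex_of_le_ascent le_rfl, iterate_ascent]

-- In `ℕ`, `(s - t) + (t - s)` is `|s - t|` and `max (min s t) (min (max s t) h)` is the median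
-- of `s`, `t`, `h`.
theorem depth_pathVertex {t : ℕ} (ht : t ≤ T.dist a b) :
    T.depth (T.pathVertex a b t) =
      T.depth (T.lca a b) + ((T.ascent a b - t) + (t - T.ascent a b)) := by
  have hla := (T.lca_anc_left a b).depth_le
  have hlb := (T.lca_anc_right a b).depth_le
  have hA := T.ascent_def a b
  have hD := T.dist_eq_ascent_add a b
  rcases le_total t (T.ascent a b) with hta | hta
  · rw [T.pathVertex_of_le_ascent hta]
    have := T.depth_iterate_add (v := a) (j := t) (by omega)
    omega
  · rw [T.pathVertex_of_ascent_le hta]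
    have := T.depth_iterate_add (v := b) (j := T.dist a b - t) (by omega)
    omega

theorem iterate_pathVertex {t u : ℕ} (ht : t ≤ T.dist a b)
    (hu : min t (T.ascent a b) ≤ u ∧ u ≤ max t (T.ascent a b)) :
    T.parent^[(t - u) + (u - t)] (T.pathVertex a b t) = T.pathVertex a b u := by
  rcases le_total t (T.ascent a b) with hta | hta
  · rw [T.pathVertex_of_le_ascent hta, T.pathVertex_of_le_ascent (by omega),
      ← Function.iterate_add_apply]
    congr 1; omega
  · rw [T.pathVertex_of_ascent_le hta, T.pathVertex_of_ascent_le (by omega),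
      ← Function.iterate_add_apply]
    congr 1; omega

theorem anc_pathVertex {t u : ℕ} (ht : t ≤ T.dist a b)
    (hu : min t (T.ascent a b) ≤ u ∧ u ≤ max t (T.ascent a b)) :
    T.anc (T.pathVertex a b u) (T.pathVertex a b t) :=
  ⟨_, T.iterate_pathVertex ht hu⟩

theorem anc_pathVertex_median {w : V} {s t : ℕ} (hs : s ≤ T.dist a b) (ht : t ≤ T.dist a b)
    (hws : T.anc w (T.pathVertex a b s)) (hwt : T.anc w (T.pathVertex a b t)) :
    T.anc w (T.pathVertex a b (max (min s t) (min (max s t) (T.ascent a b)))) := by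
  have hD := T.dist_eq_ascent_add a b
  rcases (show max (min s t) (min (max s t) (T.ascent a b)) = s ∨
      max (min s t) (min (max s t) (T.ascent a b)) = t ∨
      (max (min s t) (min (max s t) (T.ascent a b)) = T.ascent a b ∧
        (s ≤ T.ascent a b ∧ T.ascent a b ≤ t ∨ t ≤ T.ascent a b ∧ T.ascent a b ≤ s)) by omega)
    with hm | hm | ⟨hm, hst | hst⟩ <;> rw [hm]
  · exact hws
  · exact hwt
  all_goals rw [T.pathVertex_ascent]
  · refine T.anc_lca (hws.trans ?_) (hwt.trans ?_)
    · simpa only [T.pathVertex_zero] using T.anc_pathVertex (t := 0) (u := s) (by omega) (by omega)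
    · simpa only [T.pathVertex_dist] using T.anc_pathVertex (u := t) le_rfl (by omega)
  · refine T.anc_lca (hwt.trans ?_) (hws.trans ?_)
    · simpa only [T.pathVertex_zero] using T.anc_pathVertex (t := 0) (u := t) (by omega) (by omega)
    · simpa only [T.pathVertex_dist] using T.anc_pathVertex (u := s) le_rfl (by omega)

theorem lca_pathVertex {s t : ℕ} (hs : s ≤ T.dist a b) (ht : t ≤ T.dist a b) :
    T.lca (T.pathVertex a b s) (T.pathVertex a b t) =
      T.pathVertex a b (max (min s t) (min (max s t) (T.ascent a b))) :=
  anc.antisymm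
    (T.anc_pathVertex_median hs ht (T.lca_anc_left _ _) (T.lca_anc_right _ _))
    (T.anc_lca (T.anc_pathVertex hs (by omega)) (T.anc_pathVertex ht (by omega)))

theorem dist_pathVertex {s t : ℕ} (hs : s ≤ T.dist a b) (ht : t ≤ T.dist a b) :
    T.dist (T.pathVertex a b s) (T.pathVertex a b t) = (s - t) + (t - s) := by
  have hm : max (min s t) (min (max s t) (T.ascent a b)) ≤ T.dist a b := by omega
  rw [dist, T.lca_pathVertex hs ht, T.depth_pathVertex hs, T.depth_pathVertex ht,
    T.depth_pathVertex hm]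
  omega

theorem pathVertex_pathVertex {s t u : ℕ} (hs : s ≤ T.dist a b) (ht : t ≤ T.dist a b)
    (hu : min s t ≤ u ∧ u ≤ max s t) :
    T.pathVertex (T.pathVertex a b s) (T.pathVertex a b t) ((s - u) + (u - s)) =
      T.pathVertex a b u := by
  have hm : max (min s t) (min (max s t) (T.ascent a b)) ≤ T.dist a b := by omega
  have hA : T.ascent (T.pathVertex a b s) (T.pathVertex a b t) =
      (s - max (min s t) (min (max s t) (T.ascent a b))) +
        (max (min s t) (min (max s t) (T.ascent a b)) - s) := by
    rw [ascent_def, T.lca_pathVertex hs ht, T.depth_pathVertex hs, T.depth_pathVertex hm]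
    omega
  rcases le_total ((s - u) + (u - s)) (T.ascent (T.pathVertex a b s) (T.pathVertex a b t))
    with h | h
  · rw [T.pathVertex_of_le_ascent h]
    exact T.iterate_pathVertex hs (by omega)
  · rw [T.pathVertex_of_ascent_le h, T.dist_pathVertex hs ht,
      show (s - t) + (t - s) - ((s - u) + (u - s)) = (t - u) + (u - t) by omega]
    exact T.iterate_pathVertex ht (by omega)

theorem cap_cup_pathVertex {s t : ℕ} (hs : s ≤ T.dist a b) (ht : t ≤ T.dist a b) :
    let c := if T.ascent a b ≤ (s + t) / 2 then (s + t) / 2 else s + t - (s + t) / 2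
    T.cap (T.pathVertex a b s) (T.pathVertex a b t) = T.pathVertex a b c ∧
      T.cup (T.pathVertex a b s) (T.pathVertex a b t) = T.pathVertex a b (s + t - c) := by
  intro c
  have hc : T.ascent a b ≤ (s + t) / 2 ∧ c = (s + t) / 2 ∨
      (s + t) / 2 < T.ascent a b ∧ c = s + t - (s + t) / 2 := by
    simp only [c]; split_ifs <;> omega
  clear_value c
  obtain ⟨u₁, hu₁, hd₁⟩ : ∃ u, (min s t ≤ u ∧ u ≤ max s t) ∧
      (s - u) + (u - s) = ((s - t) + (t - s)) / 2 :=
    ⟨if s ≤ t then s + (t - s) / 2 else s - (s - t) / 2, by split_ifs <;> omega⟩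
  obtain ⟨u₂, hu₂, hd₂⟩ : ∃ u, (min s t ≤ u ∧ u ≤ max s t) ∧
      (s - u) + (u - s) = ((s - t) + (t - s) + 1) / 2 :=
    ⟨if s ≤ t then s + (t - s + 1) / 2 else s - (s - t + 1) / 2, by split_ifs <;> omega⟩
  unfold cap cup
  rw [T.dist_pathVertex hs ht, ← hd₁, ← hd₂, T.pathVertex_pathVertex hs ht hu₁,
    T.pathVertex_pathVertex hs ht hu₂]
  have hpair : u₁ + u₂ = s + t ∧ (u₁ = (s + t) / 2 ∨ u₂ = (s + t) / 2) := by omega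
  have hu₁D : u₁ ≤ T.dist a b := by omega
  have hu₂D : u₂ ≤ T.dist a b := by omega
  clear hu₁ hd₁ hu₂ hd₂
  by_cases hanc : T.anc (T.pathVertex a b u₁) (T.pathVertex a b u₂)
  · have hdepth := hanc.depth_le
    rw [T.depth_pathVertex hu₁D, T.depth_pathVertex hu₂D] at hdepth
    rw [if_pos hanc, if_pos hanc]
    constructor <;> congr 1 <;> omega
  · have : u₁ < min u₂ (T.ascent a b) ∨ max u₂ (T.ascent a b) < u₁ := by
      by_contra h
      exact hanc (T.anc_pathVertex hu₂D (by omega))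
    rw [if_neg hanc, if_neg hanc]
    constructor <;> congr 1 <;> omega

variable (a b)

/-- `P[a→b]` indexed by `ℤ` so that `a ∧ b` sits at `0`, `a` at `-ascent` and `b` at
`dist - ascent`; on that range the tree operations become those of `RootedInt`. -/
noncomputable def signedPathVertex (z : ℤ) : V := T.pathVertex a b (z + T.ascent a b).toNat

theorem signedPathVertex_left : T.signedPathVertex a b (-(T.ascent a b : ℤ)) = a := by
  simp [signedPathVertex, pathVertex_zero]

theorem signedPathVertex_right :
    T.signedPathVertex a b ((T.dist a b : ℤ) - T.ascent a b) = b := by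
  simp [signedPathVertex, pathVertex_dist]

theorem signedPathVertex_meet :
    T.signedPathVertex a b (RootedInt.meet (-(T.ascent a b : ℤ)) (T.dist a b - T.ascent a b)) =
      T.meet a b := by
  have hD := T.dist_eq_ascent_add a b
  rw [signedPathVertex, show RootedInt.meet (-(T.ascent a b : ℤ)) (T.dist a b - T.ascent a b)
    + T.ascent a b = T.ascent a b by unfold RootedInt.meet; omega, Int.toNat_natCast,
    pathVertex_ascent, meet]

theorem signedPathVertex_join :
    T.signedPathVertex a b (RootedInt.join (-(T.ascent a b : ℤ)) (T.dist a b - T.ascent a b)) =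
      T.join a b := by
  have hD := T.dist_eq_ascent_add a b
  rw [signedPathVertex, join, show RootedInt.join (-(T.ascent a b : ℤ)) (T.dist a b - T.ascent a b)
    + T.ascent a b = ((T.depth b - T.depth (T.lca a b) : ℕ) : ℤ) by
      unfold RootedInt.join RootedInt.meet; omega, Int.toNat_natCast]

theorem cap_cup_signedPathVertex {z w : ℤ}
    (hz : -(T.ascent a b : ℤ) ≤ z ∧ z ≤ T.dist a b - T.ascent a b)
    (hw : -(T.ascent a b : ℤ) ≤ w ∧ w ≤ T.dist a b - T.ascent a b) :
    T.cap (T.signedPathVertex a b z) (T.signedPathVertex a b w) =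
        T.signedPathVertex a b (RootedInt.cap z w) ∧
      T.cup (T.signedPathVertex a b z) (T.signedPathVertex a b w) =
        T.signedPathVertex a b (RootedInt.cup z w) := by
  obtain ⟨hcap, hcup⟩ := T.cap_cup_pathVertex (s := (z + T.ascent a b).toNat)
    (t := (w + T.ascent a b).toNat) (a := a) (b := b) (by omega) (by omega)
  simp only [signedPathVertex]
  rw [hcap, hcup]
  unfold RootedInt.cup RootedInt.cap
  constructor <;> congr 1 <;> split_ifs <;> omega

end RTree

theorem strong_implies_weak_tree_submodularity_general {ι : Type*} [Fintype ι] {V : ι → Type*}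
    (T : ∀ i, RTree (V i)) (f : (∀ i, V i) → ℝ)
    (hf : StronglyTreeSubmodular T f) :
    ∀ x y : ∀ i, V i,
      f (fun i => (T i).meet (x i) (y i)) + f (fun i => (T i).join (x i) (y i)) ≤
        f x + f y := by
  intro x y
  let lo : ι → ℤ := fun i => -((T i).ascent (x i) (y i) : ℤ)
  let hi : ι → ℤ := fun i => ((T i).dist (x i) (y i) : ℤ) - (T i).ascent (x i) (y i)
  let g : (ι → ℤ) → ℝ := fun z => f fun i => (T i).signedPathVertex (x i) (y i) (z i)
  have hS : ∀ u ∈ Set.Icc lo hi, ∀ v ∈ Set.Icc lo hi, RootedInt.StrongAt g u v := by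
    intro u hu v hv
    have hcc := fun i =>
      (T i).cap_cup_signedPathVertex (x i) (y i) ⟨hu.1 i, hu.2 i⟩ ⟨hv.1 i, hv.2 i⟩
    have := hf (fun i => (T i).signedPathVertex (x i) (y i) (u i))
      (fun i => (T i).signedPathVertex (x i) (y i) (v i))
    simpa only [RootedInt.StrongAt, g, fun i => (hcc i).1, fun i => (hcc i).2] using this
  have hbox : lo ≤ hi := fun i => by simp only [lo, hi]; omega
  have key := RootedInt.weakAt_of_strongAt hS lo ⟨le_rfl, hbox⟩ hi ⟨hbox, le_rfl⟩
  simpa only [RootedInt.WeakAt, g, lo, hi, RTree.signedPathVertex_left,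
    RTree.signedPathVertex_right, RTree.signedPathVertex_meet, RTree.signedPathVertex_join]
    using key

/-- Every strongly tree-submodular function is weakly tree-submodular:
`f(x) + f(y) ≥ f(x ∧ y) + f(x ∨ y)` for all `x, y`. -/
theorem strong_implies_weak_tree_submodularity {ι : Type*} [Fintype ι] {V : ι → Type*}
    [∀ i, Fintype (V i)] (T : ∀ i, RTree (V i)) (f : (∀ i, V i) → ℝ)
    (hf : StronglyTreeSubmodular T f) :
    ∀ x y : ∀ i, V i,
      f (fun i => (T i).meet (x i) (y i)) + f (fun i => (T i).join (x i) (y i)) ≤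
        f x + f y :=
  strong_implies_weak_tree_submodularity_general T f hf
end

section
/- Let f:D→ℝ be strongly tree-submodular and x∈D. Then f(x) = min{ f(y) : y ∈ INWARD(x) } if and only if f(x) = min{ f(y) : y∈D, y ⪯ x }; that is, x minimizes f over its inward local neighborhood if and only if x minimizes f over the whole set of its componentwise ancestors. -/
/-! If `y ⪯ x` with `ρ(x, y) = d`, the whole path from `x` to `y` climbs towards the root, so
`x ⊓ y` and `x ⊔ y` are the ancestors of `x` at distance `⌈d/2⌉` and `⌊d/2⌋`. If `x` beats
all ancestors closer than `d`, then `f x ≤ f (x ⊓ y)` and `f x ≤ f (x ⊔ y)`, and submodularity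
`f (x ⊓ y) + f (x ⊔ y) ≤ f x + f y` gives `f x ≤ f y`. Strong induction on `max_i ρ(x_i, y_i)`
reduces everything to `INWARD(x)`. -/

namespace RTree

variable {V : Type*} (T : RTree V)

theorem depth_parent_eq_sub_one (v : V) : T.depth (T.parent v) = T.depth v - 1 := by
  by_cases hv : v = T.root
  · rw [hv, T.parent_root, T.depth_root]
  · have := T.depth_parent v hv
    omega

theorem depth_iterate_parent (k : ℕ) (v : V) : T.depth (T.parent^[k] v) = T.depth v - k := by
  induction k with
  | zero => simp
  | succ k ih =>
    rw [Function.iterate_succ_apply', T.depth_parent_eq_sub_one, ih]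
    omega

theorem iterate_parent_root (k : ℕ) : T.parent^[k] T.root = T.root :=
  Function.iterate_fixed T.parent_root k

theorem iterate_parent_of_depth_le {v : V} {k : ℕ} (hk : T.depth v ≤ k) :
    T.parent^[k] v = T.root := by
  rw [← Nat.sub_add_cancel hk, Function.iterate_add_apply, T.iterate_depth, T.iterate_parent_root]

theorem anc_iterate_parent (k : ℕ) (a : V) : T.anc (T.parent^[k] a) a := ⟨k, rfl⟩

theorem depth_le_of_anc {a b : V} (h : T.anc a b) : T.depth a ≤ T.depth b := by
  obtain ⟨k, rfl⟩ := h
  rw [T.depth_iterate_parent]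
  omega

theorem le_of_anc_iterate_parent {a : V} {j k : ℕ} (hk : k ≤ T.depth a)
    (h : T.anc (T.parent^[j] a) (T.parent^[k] a)) : k ≤ j := by
  have := T.depth_le_of_anc h
  rw [T.depth_iterate_parent, T.depth_iterate_parent] at this
  omega

theorem iterate_parent_depth_sub_of_anc {a b : V} (h : T.anc b a) :
    T.parent^[T.depth a - T.depth b] a = b := by
  obtain ⟨k, rfl⟩ := h
  by_cases hk : k ≤ T.depth a
  · rw [T.depth_iterate_parent, Nat.sub_sub_self hk]
  · rw [T.iterate_parent_of_depth_le (le_of_not_ge hk), T.depth_root, Nat.sub_zero,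
      T.iterate_depth]

theorem lca_eq_of_anc {a b : V} (h : T.anc b a) : T.lca a b = b := by
  classical
  have hfind : Nat.find (T.exists_lcaIndex a b) = T.depth a - T.depth b := by
    rw [Nat.find_eq_iff, T.iterate_parent_depth_sub_of_anc h]
    refine ⟨⟨0, rfl⟩, fun j hj hanc => ?_⟩
    have := T.depth_le_of_anc hanc
    rw [T.depth_iterate_parent] at this
    omega
  rw [lca, hfind, T.iterate_parent_depth_sub_of_anc h]

theorem dist_eq_of_anc {a b : V} (h : T.anc b a) : T.dist a b = T.depth a - T.depth b := by
  rw [dist, T.lca_eq_of_anc h]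
  omega

theorem pathVertex_eq_of_anc {a b : V} (h : T.anc b a) {d : ℕ} (hd : d ≤ T.dist a b) :
    T.pathVertex a b d = T.parent^[d] a := by
  rw [T.dist_eq_of_anc h] at hd
  rw [pathVertex, T.dist_eq_of_anc h, T.lca_eq_of_anc h]
  split_ifs with hle
  · rw [le_antisymm hd hle, T.iterate_parent_depth_sub_of_anc h]
  · rfl

theorem cap_eq_of_anc {a b : V} (h : T.anc b a) :
    T.cap a b = T.parent^[(T.dist a b + 1) / 2] a := by
  have hd : T.dist a b ≤ T.depth a := by rw [T.dist_eq_of_anc h]; omega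
  rw [cap, T.pathVertex_eq_of_anc h (by omega), T.pathVertex_eq_of_anc h (by omega)]
  split_ifs with hanc
  · have := T.le_of_anc_iterate_parent (by omega) hanc
    rw [show T.dist a b / 2 = (T.dist a b + 1) / 2 by omega]
  · rfl

theorem cup_eq_of_anc {a b : V} (h : T.anc b a) :
    T.cup a b = T.parent^[T.dist a b / 2] a := by
  have hd : T.dist a b ≤ T.depth a := by rw [T.dist_eq_of_anc h]; omega
  rw [cup, T.pathVertex_eq_of_anc h (by omega), T.pathVertex_eq_of_anc h (by omega)]
  split_ifs with hanc
  · have := T.le_of_anc_iterate_parent (by omega) hanc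
    rw [show (T.dist a b + 1) / 2 = T.dist a b / 2 by omega]
  · rfl

theorem dist_iterate_parent_le (a : V) (k : ℕ) : T.dist a (T.parent^[k] a) ≤ k := by
  rw [T.dist_eq_of_anc (T.anc_iterate_parent k a), T.depth_iterate_parent]
  omega

theorem anc_cap_of_anc {a b : V} (h : T.anc b a) : T.anc (T.cap a b) a := by
  rw [T.cap_eq_of_anc h]
  exact T.anc_iterate_parent _ a

theorem anc_cup_of_anc {a b : V} (h : T.anc b a) : T.anc (T.cup a b) a := by
  rw [T.cup_eq_of_anc h]
  exact T.anc_iterate_parent _ a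

theorem dist_cap_le_of_anc {a b : V} (h : T.anc b a) :
    T.dist a (T.cap a b) ≤ (T.dist a b + 1) / 2 := by
  rw [T.cap_eq_of_anc h]
  exact T.dist_iterate_parent_le a _

theorem dist_cup_le_of_anc {a b : V} (h : T.anc b a) :
    T.dist a (T.cup a b) ≤ T.dist a b / 2 := by
  rw [T.cup_eq_of_anc h]
  exact T.dist_iterate_parent_le a _

end RTree

namespace StronglyTreeSubmodular

variable {ι : Type*} {V : ι → Type*} {T : ∀ i, RTree (V i)} {f : (∀ i, V i) → ℝ}

theorem le_of_anc_of_dist_le (hf : StronglyTreeSubmodular T f) {x : ∀ i, V i}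
    (hloc : ∀ y ∈ inward T x, f x ≤ f y) (n : ℕ) (y : ∀ i, V i)
    (hanc : ∀ i, (T i).anc (y i) (x i)) (hdist : ∀ i, (T i).dist (x i) (y i) ≤ n) :
    f x ≤ f y := by
  induction n using Nat.strong_induction_on generalizing y with
  | _ n ih =>
    by_cases hn : n ≤ 1
    · exact hloc y ⟨fun i => (hdist i).trans hn, hanc⟩
    have hcap : f x ≤ f (fun i => (T i).cap (x i) (y i)) :=
      ih ((n + 1) / 2) (by omega) _ (fun i => (T i).anc_cap_of_anc (hanc i)) fun i =>
        ((T i).dist_cap_le_of_anc (hanc i)).trans (Nat.div_le_div_right (Nat.add_le_add_right (hdist i) 1))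
    have hcup : f x ≤ f (fun i => (T i).cup (x i) (y i)) :=
      ih (n / 2) (by omega) _ (fun i => (T i).anc_cup_of_anc (hanc i)) fun i =>
        ((T i).dist_cup_le_of_anc (hanc i)).trans (Nat.div_le_div_right (hdist i))
    linarith [hf x y]

end StronglyTreeSubmodular

theorem inward_local_iff_ancestor_global_general {ι : Type*} [Fintype ι] {V : ι → Type*}
    (T : ∀ i, RTree (V i)) (f : (∀ i, V i) → ℝ)
    (hf : StronglyTreeSubmodular T f) (x : ∀ i, V i) :
    (∀ y ∈ inward T x, f x ≤ f y) ↔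
      (∀ y : ∀ i, V i, (∀ i, (T i).anc (y i) (x i)) → f x ≤ f y) :=
  ⟨fun hloc y hanc => hf.le_of_anc_of_dist_le hloc _ y hanc fun i =>
      Finset.le_sup (f := fun i => (T i).dist (x i) (y i)) (Finset.mem_univ i),
    fun hglob y hy => hglob y hy.2⟩

/-- For a strongly tree-submodular `f` and `x ∈ D`: `x` minimizes `f`
over its inward local neighborhood `INWARD(x)` if and only if `x` minimizes `f` over the
whole set of its componentwise ancestors `{y ∈ D : y ⪯ x}`. -/
theorem inward_local_iff_ancestor_global {ι : Type*} [Fintype ι] {V : ι → Type*}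
    [∀ i, Fintype (V i)] (T : ∀ i, RTree (V i)) (f : (∀ i, V i) → ℝ)
    (hf : StronglyTreeSubmodular T f) (x : ∀ i, V i) :
    (∀ y ∈ inward T x, f x ≤ f y) ↔
      (∀ y : ∀ i, V i, (∀ i, (T i).anc (y i) (x i)) → f x ≤ f y) :=
  inward_local_iff_ancestor_global_general T f hf x
end
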